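/- arXiv:2402.00339 — 2 statements merged into one kernel-verified Lean document; each statement's English description precedes it below -/
import Mathlib

section
/- If the final mass satisfies 0 < m_f < T_m (thrust exceeds gravitational force normalized to 1 at touchdown), then for any real numbers p_v and p_ω not both zero, the quantity p_0 = (T_m/m_f)·√(p_v² + p_ω²) + p_v is strictly positive. -/
theorem stmt_0 (Tm mf pv pw : ℝ) (hmf : 0 < mf) (hTm : mf < Tm)
    (hne : (pv, pw) ≠ (0, 0)) :
    0 < Tm / mf * Real.sqrt (pv ^ 2 + pw ^ 2) + pv := by
  have hs2 : 0 < pv ^ 2 + pw ^ 2 := by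
    rcases lt_or_eq_of_le (add_nonneg (sq_nonneg pv) (sq_nonneg pw)) with h | h
    · exact h
    · exfalso; apply hne
      have h1 : pv ^ 2 + pw ^ 2 = 0 := h.symm
      have hpv : pv = 0 := by nlinarith [sq_nonneg pv, sq_nonneg pw]
      have hpw : pw = 0 := by nlinarith [sq_nonneg pv, sq_nonneg pw]
      simp [hpv, hpw]
  have hs : 0 < Real.sqrt (pv ^ 2 + pw ^ 2) := Real.sqrt_pos.mpr hs2
  have habs : |pv| ≤ Real.sqrt (pv ^ 2 + pw ^ 2) := by
    rw [← Real.sqrt_sq_eq_abs]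
    exact Real.sqrt_le_sqrt (by nlinarith [sq_nonneg pw])
  have h1 : (1 : ℝ) < Tm / mf := (one_lt_div hmf).mpr hTm
  have : Real.sqrt (pv ^ 2 + pw ^ 2) < Tm / mf * Real.sqrt (pv ^ 2 + pw ^ 2) := by
    nlinarith
  nlinarith [neg_abs_le pv]
end

section
/- Let p_v, p_ω, p_r : I → ℝ be differentiable functions on an interval I with (p_v(τ), p_ω(τ)) ≠ (0,0), satisfying ṗ_v = -p_r + 2p_ω ω/r and ṗ_ω = -2p_v rω + 2p_ω v/r evaluated at a point τ₀ where ω(τ₀) = 0, v(τ₀) = 0, r(τ₀) = 1. Define ψ by sin ψ = -p_v/√(p_v² + p_ω²), cos ψ = p_ω/√(p_v² + p_ω²). Then the derivative of ψ at τ₀ satisfies ψ̇(τ₀) = p_r(τ₀)·p_ω(τ₀)/(p_v(τ₀)² + p_ω(τ₀)²). -/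
/-!
`ψ` is the polar angle of the plane curve `(p_ω, -p_v)`, and the derivative of a polar angle
of `(x, y)` is `(x y' - y x') / (x² + y²)`. At touchdown `ṗ_v = -p_r` and `ṗ_ω = 0`, which
gives `p_r p_ω / (p_v² + p_ω²)`.
-/

open Filter Topology

lemma HasDerivAt.eq_cos_mul_sub_sin_mul {ψ : ℝ → ℝ} {t ψ' s' c' : ℝ} (hψ : HasDerivAt ψ ψ' t)
    (hs : HasDerivAt (fun τ => Real.sin (ψ τ)) s' t)
    (hc : HasDerivAt (fun τ => Real.cos (ψ τ)) c' t) :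
    ψ' = Real.cos (ψ t) * s' - Real.sin (ψ t) * c' := by
  rw [hs.unique ((Real.hasDerivAt_sin _).comp t hψ),
    hc.unique ((Real.hasDerivAt_cos _).comp t hψ)]
  linear_combination -ψ' * Real.sin_sq_add_cos_sq (ψ t)

lemma deriv_eq_of_cos_sin_eq_div_sqrt {x y ψ : ℝ → ℝ} {t x' y' : ℝ}
    (hxy : (x t, y t) ≠ (0, 0)) (hx : HasDerivAt x x' t) (hy : HasDerivAt y y' t)
    (hψ : DifferentiableAt ℝ ψ t)
    (hcos : (fun τ => Real.cos (ψ τ)) =ᶠ[𝓝 t] fun τ => x τ / √(x τ ^ 2 + y τ ^ 2))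
    (hsin : (fun τ => Real.sin (ψ τ)) =ᶠ[𝓝 t] fun τ => y τ / √(x τ ^ 2 + y τ ^ 2)) :
    deriv ψ t = (x t * y' - y t * x') / (x t ^ 2 + y t ^ 2) := by
  have hpos : 0 < x t ^ 2 + y t ^ 2 := by
    by_contra! h
    exact hxy (Prod.ext (by nlinarith [sq_nonneg (x t), sq_nonneg (y t)])
      (by nlinarith [sq_nonneg (x t), sq_nonneg (y t)]))
  have hN : √(x t ^ 2 + y t ^ 2) ≠ 0 := (Real.sqrt_pos.mpr hpos).ne'
  have hN2 : √(x t ^ 2 + y t ^ 2) ^ 2 = x t ^ 2 + y t ^ 2 := Real.sq_sqrt hpos.le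
  have hnorm : HasDerivAt (fun τ => √(x τ ^ 2 + y τ ^ 2)) _ t :=
    ((hx.pow 2).add (hy.pow 2)).sqrt hpos.ne'
  have hc := (hx.div hnorm hN).congr_of_eventuallyEq hcos
  have hs := (hy.div hnorm hN).congr_of_eventuallyEq hsin
  rw [hψ.hasDerivAt.eq_cos_mul_sub_sin_mul hs hc, hcos.eq_of_nhds, hsin.eq_of_nhds]
  -- the terms coming from the derivative of the norm `N` cancel
  set N := √(x t ^ 2 + y t ^ 2)
  rw [← hN2]
  field_simp
  ring

theorem stmt_9 (τ0 : ℝ) (pv pw pr ω v r ψ : ℝ → ℝ)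
    (hne : ∀ τ, (pv τ, pw τ) ≠ (0, 0))
    (hω : ω τ0 = 0) (hv : v τ0 = 0) (hr : r τ0 = 1)
    (hpv : HasDerivAt pv (-pr τ0 + 2 * pw τ0 * ω τ0 / r τ0) τ0)
    (hpw : HasDerivAt pw (-2 * pv τ0 * r τ0 * ω τ0 + 2 * pw τ0 * v τ0 / r τ0) τ0)
    (hψdiff : DifferentiableAt ℝ ψ τ0)
    (hsin : ∀ τ, Real.sin (ψ τ) = -pv τ / Real.sqrt (pv τ ^ 2 + pw τ ^ 2))
    (hcos : ∀ τ, Real.cos (ψ τ) = pw τ / Real.sqrt (pv τ ^ 2 + pw τ ^ 2)) :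
    deriv ψ τ0 = pr τ0 * pw τ0 / (pv τ0 ^ 2 + pw τ0 ^ 2) := by
  norm_num [hω, hv, hr] at hpv hpw
  have hsq (τ : ℝ) : pv τ ^ 2 + pw τ ^ 2 = pw τ ^ 2 + (-pv τ) ^ 2 := by ring
  have hpw0 : (pw τ0, -pv τ0) ≠ (0, 0) := fun h => hne τ0 (by simp_all)
  have key := deriv_eq_of_cos_sin_eq_div_sqrt (y := fun τ => -pv τ) hpw0 hpw hpv.neg
    hψdiff (.of_forall fun τ => by simp only [hcos, hsq])
    (.of_forall fun τ => by simp only [hsin, hsq])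
  rw [key, hsq]
  ring
end
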